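/- Fix L > 0 and k ≥ 1. The map h_k : C → C_k defined by h_k(R, θ) = (R^{l_k/l}, arccos(tanh(k·arccosh(1/sin θ)))) satisfies sup over C of the hyperbolic operator norm of its differential equal to k, and the supremum is attained on the short side θ = π/2. Consequently h_k is k-Lipschitz with respect to the hyperbolic metrics. -/

import Mathlib

open Real Set

/-- The inverse hyperbolic cosine, `arccosh x = log (x + √(x² - 1))`. -/
noncomputable def arccosh (x : ℝ) : ℝ := Real.log (x + Real.sqrt (x ^ 2 - 1))

/-- The hyperbolic distance between two points of the upper half-plane (viewed in `ℂ`). -/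
noncomputable def hdist (z w : ℂ) : ℝ :=
  2 * Real.arsinh (dist z w / (2 * Real.sqrt (z.im * w.im)))

/-!
In Fermi coordinates `(t, d)` about the geodesic `iℝ₊` the hyperbolic distance satisfies
`cosh D = cosh d₁ cosh d₂ cosh (t₁ - t₂) - sinh d₁ sinh d₂`, and `h_k` is `(t, d) ↦ (α t, k d)`
with `α = l_k / l ≤ 1`. The Lipschitz bound then reduces to `α cosh (k d) ≤ k cosh d` on
`0 ≤ d ≤ L`, which is the bound on the normal component of the differential. As
`cosh (k d) / cosh d` increases with `d`, it suffices to check it at `d = L`, where it follows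
from `t ↦ arsinh (1 / (2 sinh t)) cosh t` being decreasing. The rest combines
`cosh (α ρ) - 1 ≤ α² (cosh ρ - 1)` with the monotonicity of `cosh (k x) - k² cosh x` on `[0, ∞)`.
-/

namespace Real

lemma mul_sinh_le_sinh_mul {k x : ℝ} (hk : 1 ≤ k) (hx : 0 ≤ x) :
    k * sinh x ≤ sinh (k * x) := by
  have hmono : MonotoneOn (fun x ↦ sinh (k * x) - k * sinh x) (Ici 0) := by
    refine monotoneOn_of_hasDerivWithinAt_nonneg (convex_Ici 0) (by fun_prop)
      (fun x _ ↦ ((((hasDerivAt_id x).const_mul k).sinh).sub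
        ((hasDerivAt_sinh x).const_mul k)).hasDerivWithinAt) (fun x hx ↦ ?_)
    rw [interior_Ici, mem_Ioi] at hx
    have : cosh x ≤ cosh (k * x) := by
      rw [cosh_le_cosh, abs_of_pos hx, abs_of_pos (by positivity)]
      nlinarith
    simp only [id, mul_one]
    nlinarith
  simpa using hmono self_mem_Ici hx hx

lemma monotoneOn_cosh_mul_sub_sq_mul_cosh {k : ℝ} (hk : 1 ≤ k) :
    MonotoneOn (fun x ↦ cosh (k * x) - k ^ 2 * cosh x) (Ici 0) := by
  refine monotoneOn_of_hasDerivWithinAt_nonneg (convex_Ici 0) (by fun_prop)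
    (fun x _ ↦ ((((hasDerivAt_id x).const_mul k).cosh).sub
      ((hasDerivAt_cosh x).const_mul (k ^ 2))).hasDerivWithinAt) (fun x hx ↦ ?_)
  rw [interior_Ici, mem_Ioi] at hx
  have := mul_sinh_le_sinh_mul hk hx.le
  simp only [id, mul_one]
  nlinarith

lemma cosh_mul_sub_one_le {α x : ℝ} (hα₀ : 0 ≤ α) (hα₁ : α ≤ 1) :
    cosh (α * x) - 1 ≤ α ^ 2 * (cosh x - 1) := by
  rcases hα₀.eq_or_lt with rfl | hα₀
  · simp
  rw [← cosh_abs x, ← cosh_abs (α * x), abs_mul, abs_of_pos hα₀]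
  have := monotoneOn_cosh_mul_sub_sq_mul_cosh (one_le_inv_iff₀.mpr ⟨hα₀, hα₁⟩)
    (self_mem_Ici) (mem_Ici.mpr (by positivity : 0 ≤ α * |x|)) (by positivity)
  simp only [mul_zero, cosh_zero, mul_one, inv_mul_cancel_left₀ hα₀.ne'] at this
  field_simp at this
  nlinarith

lemma cosh_mul_mul_cosh_le {k a b : ℝ} (hk : 1 ≤ k) (ha : 0 ≤ a) (hab : a ≤ b) :
    cosh (k * a) * cosh b ≤ cosh (k * b) * cosh a := by
  have h₁ : cosh (k * a + b) ≤ cosh (k * b + a) := by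
    rw [cosh_le_cosh, abs_of_nonneg (by nlinarith), abs_of_nonneg (by nlinarith)]
    nlinarith
  have h₂ : cosh (k * a - b) ≤ cosh (k * b - a) := by
    rw [cosh_le_cosh, ← sq_le_sq]
    nlinarith [mul_nonneg (by nlinarith : 0 ≤ k ^ 2 - 1) (by nlinarith : 0 ≤ b ^ 2 - a ^ 2)]
  rw [cosh_add, cosh_add] at h₁
  rw [cosh_sub, cosh_sub] at h₂
  linarith

lemma cosh_mul_le_of_cosh_eq {k α d₁ d₂ ρ D : ℝ} (hk : 1 ≤ k) (hα₀ : 0 ≤ α) (hα₁ : α ≤ 1)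
    (h₁ : α * cosh (k * d₁) ≤ k * cosh d₁) (h₂ : α * cosh (k * d₂) ≤ k * cosh d₂)
    (hD : 0 ≤ D) (hcosh : cosh D = cosh d₁ * cosh d₂ * cosh ρ - sinh d₁ * sinh d₂) :
    cosh (k * d₁) * cosh (k * d₂) * cosh (α * ρ) - sinh (k * d₁) * sinh (k * d₂) ≤
      cosh (k * D) := by
  have hgap : cosh D - cosh (d₁ - d₂) = cosh d₁ * cosh d₂ * (cosh ρ - 1) := by
    rw [hcosh, cosh_sub]; ring
  have hρ : 0 ≤ cosh ρ - 1 := by linarith [one_le_cosh ρ]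
  have hdD : |d₁ - d₂| ≤ D := by
    have := cosh_le_cosh.mp (by nlinarith [mul_pos (cosh_pos d₁) (cosh_pos d₂)] :
      cosh (d₁ - d₂) ≤ cosh D)
    rwa [abs_of_nonneg hD] at this
  have hprod : (α * cosh (k * d₁)) * (α * cosh (k * d₂)) ≤ (k * cosh d₁) * (k * cosh d₂) :=
    mul_le_mul h₁ h₂ (by positivity) (by positivity)
  calc cosh (k * d₁) * cosh (k * d₂) * cosh (α * ρ) - sinh (k * d₁) * sinh (k * d₂)
      = cosh (k * (d₁ - d₂)) + cosh (k * d₁) * cosh (k * d₂) * (cosh (α * ρ) - 1) := by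
        rw [mul_sub, cosh_sub]; ring
    _ ≤ cosh (k * (d₁ - d₂)) + cosh (k * d₁) * cosh (k * d₂) * (α ^ 2 * (cosh ρ - 1)) := by
        gcongr
        exact cosh_mul_sub_one_le hα₀ hα₁
    _ ≤ cosh (k * (d₁ - d₂)) + (k * cosh d₁) * (k * cosh d₂) * (cosh ρ - 1) := by
        nlinarith
    _ = cosh (k * |d₁ - d₂|) + k ^ 2 * (cosh D - cosh |d₁ - d₂|) := by
        have : cosh (k * |d₁ - d₂|) = cosh (k * (d₁ - d₂)) := by
          rw [← cosh_abs, abs_mul, abs_abs, ← abs_mul, cosh_abs]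
        rw [this, cosh_abs, hgap]; ring
    _ ≤ cosh (k * D) := by
        have := monotoneOn_cosh_mul_sub_sq_mul_cosh hk (mem_Ici.mpr (abs_nonneg _))
          (mem_Ici.mpr hD) hdD
        simp only at this
        linarith

lemma sin_arccos_tanh (d : ℝ) : sin (arccos (tanh d)) = (cosh d)⁻¹ := by
  have : 1 - tanh d ^ 2 = (cosh d)⁻¹ ^ 2 := by
    rw [tanh_eq_sinh_div_cosh]
    field_simp
    linarith [cosh_sq d]
  rw [sin_arccos, this, sqrt_sq (by positivity)]

lemma cos_arccos_tanh (d : ℝ) : cos (arccos (tanh d)) = tanh d :=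
  cos_arccos (neg_one_lt_tanh d).le (tanh_lt_one d).le

lemma arsinh_le_self {x : ℝ} (hx : 0 ≤ x) : arsinh x ≤ x := by
  conv_rhs => rw [← arsinh_sinh x]
  exact arsinh_le_arsinh.mpr (self_le_sinh_iff.mpr hx)

lemma artanh_cos_mem_Icc {L θ₁ θ : ℝ} (hθ₁ : cos θ₁ = tanh L) (hθ₁₀ : 0 ≤ θ₁)
    (hθ : θ ∈ Icc θ₁ (π / 2)) : artanh (cos θ) ∈ Icc 0 L := by
  have hcos : 0 ≤ cos θ := cos_nonneg_of_mem_Icc ⟨by linarith [hθ.1, pi_pos], hθ.2⟩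
  refine ⟨artanh_nonneg hcos, ?_⟩
  rw [← artanh_tanh L, ← hθ₁]
  refine artanh_le_artanh (by linarith) (hθ₁ ▸ tanh_lt_one L) ?_
  exact cos_le_cos_of_nonneg_of_le_pi hθ₁₀ (by linarith [hθ.2, pi_pos]) hθ.1

end Real

lemma arccosh_eq_arcosh : arccosh = arcosh := rfl

/-- `l` as a function of `L`, solving `2 sinh l sinh L = 1`. -/
noncomputable def collarWidth (L : ℝ) : ℝ := arsinh (1 / (2 * sinh L))

lemma collarWidth_pos {L : ℝ} (hL : 0 < L) : 0 < collarWidth L :=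
  arsinh_pos_iff.mpr (by have := sinh_pos_iff.mpr hL; positivity)

lemma collarWidth_le_collarWidth {L L' : ℝ} (hL : 0 < L) (hLL' : L ≤ L') :
    collarWidth L' ≤ collarWidth L := by
  rw [collarWidth, collarWidth, arsinh_le_arsinh]
  have := sinh_pos_iff.mpr hL
  gcongr
  exact sinh_le_sinh.mpr hLL'

lemma collarWidth_mul_div_mem_Icc {k L : ℝ} (hk : 1 ≤ k) (hL : 0 < L) :
    collarWidth (k * L) / collarWidth L ∈ Icc 0 1 :=
  ⟨div_nonneg (collarWidth_pos (by nlinarith)).le (collarWidth_pos hL).le,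
    (div_le_one (collarWidth_pos hL)).mpr (collarWidth_le_collarWidth hL (by nlinarith))⟩

lemma antitoneOn_collarWidth_mul_cosh : AntitoneOn (fun t ↦ collarWidth t * cosh t) (Ioi 0) := by
  simp only [collarWidth, one_div]
  refine antitoneOn_of_hasDerivWithinAt_nonpos (convex_Ioi 0)
    (f' := fun t ↦ (√(1 + ((2 * sinh t)⁻¹) ^ 2))⁻¹ • (-(2 * cosh t) / (2 * sinh t) ^ 2) * cosh t
      + arsinh (2 * sinh t)⁻¹ * sinh t) ?_ (fun t ht ↦ ?_) (fun t ht ↦ ?_)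
  · refine ContinuousOn.mul ?_ continuous_cosh.continuousOn
    refine continuous_arsinh.comp_continuousOn (ContinuousOn.inv₀ (by fun_prop) fun t ht ↦ ?_)
    have : 0 < sinh t := sinh_pos_iff.mpr ht
    positivity
  · rw [interior_Ioi] at ht
    have : 2 * sinh t ≠ 0 := by have := sinh_pos_iff.mpr ht; positivity
    exact ((((hasDerivAt_sinh t).const_mul 2).inv this).arsinh.mul
      (hasDerivAt_cosh t)).hasDerivWithinAt
  · rw [interior_Ioi] at ht
    have hs : 0 < sinh t := sinh_pos_iff.mpr ht
    have hsc : sinh t < cosh t := sinh_lt_cosh t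
    set s := sinh t
    set c := cosh t
    set Q := √(1 + ((2 * s)⁻¹) ^ 2)
    have hQpos : 0 < Q := by positivity
    -- `s Q ≤ c` makes the negative term at most `-1/2`; `arsinh u ≤ u` bounds the other by `1/2`.
    have hQ : s * Q ≤ c := by
      have hQsq : (s * Q) ^ 2 = s ^ 2 + 1 / 4 := by
        rw [mul_pow, sq_sqrt (by positivity)]; field_simp; ring
      nlinarith [cosh_sq t, mul_pos hs hQpos]
    have harsinh : arsinh (2 * s)⁻¹ * s ≤ 1 / 2 :=
      calc arsinh (2 * s)⁻¹ * s ≤ (2 * s)⁻¹ * s := by gcongr; exact arsinh_le_self (by positivity)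
        _ = 1 / 2 := by field_simp
    have hcosh_term : 1 / 2 ≤ Q⁻¹ * (2 * c / (2 * s) ^ 2) * c := by
      rw [show Q⁻¹ * (2 * c / (2 * s) ^ 2) * c = c ^ 2 / (2 * s ^ 2 * Q) by field_simp,
        le_div_iff₀ (by positivity)]
      nlinarith
    simp only [smul_eq_mul, neg_div, mul_neg, neg_mul]
    linarith

lemma collarWidth_mul_div_mul_cosh_mul_le {k L d : ℝ} (hk : 1 ≤ k) (hL : 0 < L) (hd : 0 ≤ d)
    (hdL : d ≤ L) : collarWidth (k * L) / collarWidth L * cosh (k * d) ≤ k * cosh d := by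
  have hkL : L ≤ k * L := by nlinarith
  have hφ : collarWidth (k * L) * cosh (k * L) ≤ collarWidth L * cosh L :=
    antitoneOn_collarWidth_mul_cosh hL (hL.trans_le hkL) hkL
  have hratio := cosh_mul_mul_cosh_le hk hd hdL
  have hl := collarWidth_pos hL
  have hlk := collarWidth_pos (hL.trans_le hkL)
  rw [div_mul_eq_mul_div, div_le_iff₀ hl]
  refine le_of_mul_le_mul_right ?_ (cosh_pos L)
  calc collarWidth (k * L) * cosh (k * d) * cosh L
      ≤ collarWidth (k * L) * cosh (k * L) * cosh d := by
        rw [mul_assoc, mul_assoc]; exact mul_le_mul_of_nonneg_left hratio hlk.le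
    _ ≤ collarWidth L * cosh L * cosh d := by gcongr
    _ ≤ k * cosh d * collarWidth L * cosh L := by
        nlinarith [mul_nonneg (mul_nonneg hl.le (cosh_pos L).le) (cosh_pos d).le]

/-- The hyperbolic operator norm of the differential of `h_k` at `R e^{iθ}`, `p = (R, θ)`,
with `α = l_k / l`. -/
noncomputable def fermiStretchDerivNorm (α k : ℝ) (p : ℝ × ℝ) : ℝ :=
  max (α * p.1 ^ (α - 1))
    (k * cosh (arccosh (1 / sin p.2)) / cosh (k * arccosh (1 / sin p.2)))

lemma fermiStretchDerivNorm_le {α k : ℝ} {p : ℝ × ℝ} (hα : α ≤ 1) (hk : 1 ≤ k) (hR : 1 ≤ p.1) :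
    fermiStretchDerivNorm α k p ≤ k := by
  refine max_le ?_ ?_
  · calc α * p.1 ^ (α - 1) ≤ 1 := mul_le_one₀ hα (rpow_nonneg (by linarith) _)
          (rpow_le_one_of_one_le_of_nonpos hR (by linarith))
      _ ≤ k := hk
  · rw [div_le_iff₀ (cosh_pos _)]
    gcongr
    rw [cosh_le_cosh, abs_mul, abs_of_nonneg (by linarith : 0 ≤ k)]
    nlinarith [abs_nonneg (arccosh (1 / sin p.2))]

lemma fermiStretchDerivNorm_pi_div_two {α k R : ℝ} (hα : α ≤ 1) (hk : 1 ≤ k) (hR : 1 ≤ R) :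
    fermiStretchDerivNorm α k (R, π / 2) = k := by
  have hle := fermiStretchDerivNorm_le hα hk (p := (R, π / 2)) hR
  simp only [fermiStretchDerivNorm, sin_pi_div_two, div_one, arccosh_eq_arcosh, arcosh_zero,
    mul_zero, cosh_zero, mul_one] at hle ⊢
  exact max_eq_right (le_max_left _ _ |>.trans hle)

section Fermi

open Complex
open scoped UpperHalfPlane

/-- Fermi coordinates about the geodesic `iℝ₊`: the point at signed distance `d` from it whose
foot on it is `i eᵗ`. -/
noncomputable def fermi (t d : ℝ) : ℍ :=
  ⟨Real.exp t * exp (arccos (Real.tanh d) * I), by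
    rw [im_ofReal_mul, exp_ofReal_mul_I_im, Real.sin_arccos_tanh]; positivity⟩

lemma coe_fermi (t d : ℝ) :
    (fermi t d : ℂ) = Real.exp t * exp (arccos (Real.tanh d) * I) := rfl

lemma fermi_re (t d : ℝ) : (fermi t d : ℂ).re = Real.exp t * Real.tanh d := by
  rw [coe_fermi, re_ofReal_mul, exp_ofReal_mul_I_re, Real.cos_arccos_tanh]

lemma fermi_im (t d : ℝ) : (fermi t d : ℂ).im = Real.exp t * (Real.cosh d)⁻¹ := by
  rw [coe_fermi, im_ofReal_mul, exp_ofReal_mul_I_im, Real.sin_arccos_tanh]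

lemma cosh_dist_fermi (t₁ d₁ t₂ d₂ : ℝ) :
    Real.cosh (dist (fermi t₁ d₁) (fermi t₂ d₂)) =
      Real.cosh d₁ * Real.cosh d₂ * Real.cosh (t₁ - t₂) - Real.sinh d₁ * Real.sinh d₂ := by
  rw [UpperHalfPlane.cosh_dist, ← UpperHalfPlane.coe_im, ← UpperHalfPlane.coe_im, Complex.dist_eq,
    Complex.sq_norm, normSq_apply]
  simp only [sub_re, sub_im, fermi_re, fermi_im]
  rw [Real.cosh_eq (t₁ - t₂), Real.exp_neg, Real.exp_sub, Real.tanh_eq_sinh_div_cosh,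
    Real.tanh_eq_sinh_div_cosh]
  have := Real.cosh_pos d₁
  have := Real.cosh_pos d₂
  have := Real.exp_pos t₁
  have := Real.exp_pos t₂
  field_simp
  linear_combination -(Real.exp t₁ ^ 2 * Real.cosh d₂ ^ 2) * Real.cosh_sq d₁
    - Real.cosh d₁ ^ 2 * Real.exp t₂ ^ 2 * Real.cosh_sq d₂

lemma dist_fermi_mul_le {k α t₁ t₂ d₁ d₂ : ℝ} (hk : 1 ≤ k) (hα₀ : 0 ≤ α) (hα₁ : α ≤ 1)
    (h₁ : α * Real.cosh (k * d₁) ≤ k * Real.cosh d₁)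
    (h₂ : α * Real.cosh (k * d₂) ≤ k * Real.cosh d₂) :
    dist (fermi (α * t₁) (k * d₁)) (fermi (α * t₂) (k * d₂)) ≤
      k * dist (fermi t₁ d₁) (fermi t₂ d₂) := by
  have hcosh := Real.cosh_mul_le_of_cosh_eq hk hα₀ hα₁ h₁ h₂ dist_nonneg
    (cosh_dist_fermi t₁ d₁ t₂ d₂)
  rw [mul_sub, ← cosh_dist_fermi, Real.cosh_le_cosh, abs_of_nonneg dist_nonneg,
    abs_of_nonneg (mul_nonneg (by linarith) dist_nonneg)] at hcosh
  exact hcosh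

lemma norm_fermi (t d : ℝ) : ‖(fermi t d : ℂ)‖ = Real.exp t := by
  rw [coe_fermi, norm_mul, norm_real, norm_exp_ofReal_mul_I, Real.norm_of_nonneg (Real.exp_pos t).le,
    mul_one]

lemma arg_fermi (t d : ℝ) : arg (fermi t d : ℂ) = arccos (Real.tanh d) := by
  rw [coe_fermi, arg_real_mul _ (Real.exp_pos t), exp_mul_I, arg_cos_add_sin_mul_I
    ⟨by linarith [Real.pi_pos, arccos_nonneg (Real.tanh d)], arccos_le_pi _⟩]

lemma ofReal_mul_exp_mul_I_eq_fermi {R θ : ℝ} (hR : 0 < R) (hθ : θ ∈ Ioo 0 π) :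
    (R : ℂ) * exp (θ * I) = fermi (Real.log R) (artanh (Real.cos θ)) := by
  have hcos : Real.cos θ ∈ Ioo (-1) 1 := by
    rw [← Real.cos_pi, ← Real.cos_zero]
    exact ⟨Real.cos_lt_cos_of_nonneg_of_le_pi hθ.1.le le_rfl hθ.2,
      Real.cos_lt_cos_of_nonneg_of_le_pi le_rfl hθ.2.le hθ.1⟩
  rw [coe_fermi, Real.exp_log hR, tanh_artanh hcos, arccos_cos hθ.1.le hθ.2.le]

lemma exists_fermi_eq {L θ₁ R θ : ℝ} (hθ₁ : Real.cos θ₁ = Real.tanh L) (hθ₁₀ : 0 < θ₁)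
    (hR : 0 < R) (hθ : θ ∈ Icc θ₁ (π / 2)) :
    ∃ t, ∃ d ∈ Icc 0 L, (R : ℂ) * exp (θ * I) = fermi t d :=
  ⟨_, _, Real.artanh_cos_mem_Icc hθ₁ hθ₁₀.le hθ,
    ofReal_mul_exp_mul_I_eq_fermi hR ⟨hθ₁₀.trans_le hθ.1, by linarith [hθ.2, Real.pi_pos]⟩⟩

/-- The map `h_k` of the statement, with `α = l_k / l`. -/
noncomputable def fermiStretch (α k : ℝ) (z : ℂ) : ℂ :=
  ((‖z‖ ^ α : ℝ) : ℂ) *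
    exp ((arccos (Real.tanh (k * arccosh (1 / Real.sin (arg z)))) : ℝ) * I)

lemma fermiStretch_fermi (α k t : ℝ) {d : ℝ} (hd : 0 ≤ d) :
    fermiStretch α k (fermi t d) = fermi (α * t) (k * d) := by
  rw [fermiStretch, norm_fermi, arg_fermi, Real.sin_arccos_tanh, one_div, inv_inv,
    arccosh_eq_arcosh, Real.arcosh_cosh hd, ← Real.exp_mul, mul_comm t,
    coe_fermi]

lemma hdist_coe (z w : ℍ) : hdist z w = dist z w := rfl

end Fermi

/-- Fix `L > 0`, `k ≥ 1`. The map `h_k : C → C_k`,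
`h_k (R e^{iθ}) = R^{l_k/l} e^{iθ'}` with `θ' = arccos (tanh (k · arccosh (1 / sin θ)))`,
has the supremum over `C` of the hyperbolic operator norm of its differential,
`max {(l_k/l)·R^{l_k/l-1}, k·cosh d / cosh (k d)}` (`d = arccosh (1/sin θ)`), equal to `k`;
the supremum is attained on the short side `θ = π/2`; consequently `h_k` is `k`-Lipschitz
for the hyperbolic metrics. -/
theorem stmt10 (L k : ℝ) (hL : 0 < L) (hk : 1 ≤ k)
    (l lk θ₁ : ℝ)
    (hl : l = Real.arsinh (1 / (2 * Real.sinh L)))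
    (hlk : lk = Real.arsinh (1 / (2 * Real.sinh (k * L))))
    (hθ₁ : Real.cos θ₁ = Real.tanh L) (hθ₁' : θ₁ ∈ Set.Ioo 0 (π / 2))
    (opnorm : ℝ × ℝ → ℝ)
    (hop : ∀ p : ℝ × ℝ, opnorm p =
      max ((lk / l) * p.1 ^ (lk / l - 1))
        (k * Real.cosh (arccosh (1 / Real.sin p.2)) /
          Real.cosh (k * arccosh (1 / Real.sin p.2))))
    (C : Set ℂ)
    (hC : C = {z : ℂ | ∃ R θ : ℝ, 1 ≤ R ∧ R ≤ Real.exp (2 * l) ∧ θ₁ ≤ θ ∧ θ ≤ π / 2 ∧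
      z = (R : ℂ) * Complex.exp (θ * Complex.I)})
    (h : ℂ → ℂ)
    (hh : ∀ z : ℂ, h z = ((‖z‖ ^ (lk / l) : ℝ) : ℂ) *
      Complex.exp ((Real.arccos (Real.tanh (k * arccosh (1 / Real.sin (Complex.arg z)))) : ℝ)
        * Complex.I)) :
    sSup (opnorm '' (Set.Icc 1 (Real.exp (2 * l)) ×ˢ Set.Icc θ₁ (π / 2))) = k ∧
    (∀ R : ℝ, R ∈ Set.Icc 1 (Real.exp (2 * l)) → opnorm (R, π / 2) = k) ∧
    (∀ z ∈ C, ∀ w ∈ C, hdist (h z) (h w) ≤ k * hdist z w) := by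
  obtain rfl : l = collarWidth L := hl
  obtain rfl : lk = collarWidth (k * L) := hlk
  obtain rfl : opnorm = fermiStretchDerivNorm (collarWidth (k * L) / collarWidth L) k := funext hop
  obtain rfl : h = fermiStretch (collarWidth (k * L) / collarWidth L) k := funext hh
  subst hC
  obtain ⟨hα₀, hα₁⟩ := collarWidth_mul_div_mem_Icc hk hL
  have hone : (1 : ℝ) ∈ Icc 1 (exp (2 * collarWidth L)) :=
    ⟨le_rfl, one_le_exp (by have := collarWidth_pos hL; positivity)⟩
  refine ⟨IsGreatest.csSup_eq ⟨⟨(1, π / 2), ⟨hone, hθ₁'.2.le, le_rfl⟩,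
    fermiStretchDerivNorm_pi_div_two hα₁ hk le_rfl⟩, ?_⟩,
    fun R hR ↦ fermiStretchDerivNorm_pi_div_two hα₁ hk hR.1, ?_⟩
  · rintro _ ⟨p, hp, rfl⟩
    exact fermiStretchDerivNorm_le hα₁ hk hp.1.1
  · rintro _ ⟨R, θ, hR, -, hθ, hθ', rfl⟩ _ ⟨S, φ, hS, -, hφ, hφ', rfl⟩
    obtain ⟨t₁, d₁, hd₁, e₁⟩ := exists_fermi_eq hθ₁ hθ₁'.1 (zero_lt_one.trans_le hR) ⟨hθ, hθ'⟩
    obtain ⟨t₂, d₂, hd₂, e₂⟩ := exists_fermi_eq hθ₁ hθ₁'.1 (zero_lt_one.trans_le hS) ⟨hφ, hφ'⟩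
    rw [e₁, e₂, fermiStretch_fermi _ _ _ hd₁.1, fermiStretch_fermi _ _ _ hd₂.1, hdist_coe,
      hdist_coe]
    exact dist_fermi_mul_le hk hα₀ hα₁ (collarWidth_mul_div_mul_cosh_mul_le hk hL hd₁.1 hd₁.2)
      (collarWidth_mul_div_mul_cosh_mul_le hk hL hd₂.1 hd₂.2)
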